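/- arXiv:0804.0436 — 2 statements merged into one kernel-verified Lean document; each statement's English description precedes it below -/
import Mathlib

section
/- Let 𝔐 = (V,⟨·,·⟩,A) be a model of neutral signature (2,2). If 𝔐 is null Osserman, then 𝔐 is Einstein: there is a constant c with ρ_A(x,y) = c⟨x,y⟩ for all x,y ∈ V. -/
open Matrix BigOperators

/-- `V = ℝ⁴`. -/
abbrev V4 : Type := Fin 4 → ℝ

/-- The neutral inner product of signature (2,2):
`⟨x,y⟩ = −x₁y₁ − x₂y₂ + x₃y₃ + x₄y₄`. -/
def nip (x y : V4) : ℝ := -(x 0 * y 0) - x 1 * y 1 + x 2 * y 2 + x 3 * y 3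

/-- The signs `ε₁ = ε₂ = −1`, `ε₃ = ε₄ = 1`. -/
def eps : Fin 4 → ℝ := ![-1, -1, 1, 1]

/-- The standard basis vectors `e i`. -/
def stdb (i : Fin 4) : V4 := fun j => if j = i then 1 else 0

/-- A 4-linear map `A : V⁴ → ℝ` (linearity in each slot). -/
def IsMultilinear (A : V4 → V4 → V4 → V4 → ℝ) : Prop :=
  (∀ (c : ℝ) (x x' y z w : V4), A (c • x + x') y z w = c * A x y z w + A x' y z w) ∧
  (∀ (c : ℝ) (x y y' z w : V4), A x (c • y + y') z w = c * A x y z w + A x y' z w) ∧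
  (∀ (c : ℝ) (x y z z' w : V4), A x y (c • z + z') w = c * A x y z w + A x y z' w) ∧
  (∀ (c : ℝ) (x y z w w' : V4), A x y z (c • w + w') = c * A x y z w + A x y z w')

/-- Curvature symmetries:
`A(x,y,z,v) = −A(y,x,z,v) = A(z,v,x,y)` and the first Bianchi identity. -/
def HasCurvSym (A : V4 → V4 → V4 → V4 → ℝ) : Prop :=
  (∀ x y z w, A x y z w = - A y x z w) ∧
  (∀ x y z w, A x y z w = A z w x y) ∧
  (∀ x y z w, A x y z w + A y z x w + A z x y w = 0)

/-- An algebraic curvature tensor on `(V,⟨·,·⟩)`. -/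
def IsModel (A : V4 → V4 → V4 → V4 → ℝ) : Prop := IsMultilinear A ∧ HasCurvSym A

/-- The Jacobi operator `J_A(x)`, as a matrix: it is the unique linear map with
`⟨J_A(x)y, z⟩ = A(y,x,x,z)`; its matrix entries are `J i j = ε i * A(e j, x, x, e i)`. -/
def jacobi (A : V4 → V4 → V4 → V4 → ℝ) (x : V4) : Matrix (Fin 4) (Fin 4) ℝ :=
  Matrix.of fun i j => eps i * A (stdb j) x x (stdb i)

/-- Two endomorphisms of `V` are similar (conjugate by an invertible linear map). -/
def MatSimilar (M N : Matrix (Fin 4) (Fin 4) ℝ) : Prop :=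
  ∃ L : Matrix (Fin 4) (Fin 4) ℝ, IsUnit L.det ∧ M * L = L * N

/-- Spacelike Osserman: the characteristic polynomial of `J_A` is constant on
unit spacelike vectors. -/
def SpacelikeOsserman (A : V4 → V4 → V4 → V4 → ℝ) : Prop :=
  ∀ u w : V4, nip u u = 1 → nip w w = 1 → (jacobi A u).charpoly = (jacobi A w).charpoly

/-- Timelike Osserman: the characteristic polynomial of `J_A` is constant on
unit timelike vectors. -/
def TimelikeOsserman (A : V4 → V4 → V4 → V4 → ℝ) : Prop :=
  ∀ u w : V4, nip u u = -1 → nip w w = -1 → (jacobi A u).charpoly = (jacobi A w).charpoly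

/-- Null Osserman: `J_A(v)` is nilpotent for every null vector `v`. -/
def NullOsserman (A : V4 → V4 → V4 → V4 → ℝ) : Prop :=
  ∀ v : V4, nip v v = 0 → IsNilpotent (jacobi A v)

/-- Spacelike Jordan Osserman: the Jordan normal form of `J_A` is constant on
unit spacelike vectors. -/
def SpacelikeJordanOsserman (A : V4 → V4 → V4 → V4 → ℝ) : Prop :=
  ∀ u w : V4, nip u u = 1 → nip w w = 1 → MatSimilar (jacobi A u) (jacobi A w)

/-- Timelike Jordan Osserman. -/
def TimelikeJordanOsserman (A : V4 → V4 → V4 → V4 → ℝ) : Prop :=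
  ∀ u w : V4, nip u u = -1 → nip w w = -1 → MatSimilar (jacobi A u) (jacobi A w)

/-- Null Jordan Osserman: the Jordan normal form of `J_A` is constant on
nonzero null vectors. -/
def NullJordanOsserman (A : V4 → V4 → V4 → V4 → ℝ) : Prop :=
  ∀ u w : V4, u ≠ 0 → w ≠ 0 → nip u u = 0 → nip w w = 0 →
    MatSimilar (jacobi A u) (jacobi A w)

/-- The Ricci tensor `ρ_A(x,y) = Σᵢ εᵢ A(eᵢ,x,y,eᵢ)`. -/
def ricci (A : V4 → V4 → V4 → V4 → ℝ) (x y : V4) : ℝ :=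
  ∑ i : Fin 4, eps i * A (stdb i) x y (stdb i)

/-- Einstein: `ρ_A = c⟨·,·⟩`. -/
def Einstein (A : V4 → V4 → V4 → V4 → ℝ) : Prop :=
  ∃ c : ℝ, ∀ x y : V4, ricci A x y = c * nip x y

/-- The scalar curvature `τ_A = Σᵢ εᵢ ρ_A(eᵢ,eᵢ)`. -/
def scal (A : V4 → V4 → V4 → V4 → ℝ) : ℝ :=
  ∑ i : Fin 4, eps i * ricci A (stdb i) (stdb i)

/-- The Weyl tensor. -/
noncomputable def weyl (A : V4 → V4 → V4 → V4 → ℝ) (x y z v : V4) : ℝ :=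
  A x y z v + (scal A / 6) * (nip y z * nip x v - nip x z * nip y v)
    - (1/2) * (ricci A y z * nip x v - ricci A x z * nip y v
        + ricci A x v * nip y z - ricci A y v * nip x z)

/-- A 2-vector `x ∧ y`, represented by its antisymmetric coefficient matrix. -/
def wedge (x y : V4) : Matrix (Fin 4) (Fin 4) ℝ :=
  Matrix.of fun i j => x i * y j - x j * y i

/-- The Weyl tensor as a symmetric bilinear form on 2-vectors, determined by
`W_A(x∧y, z∧v) = W_A(x,y,z,v)`. -/
noncomputable def weylForm (A : V4 → V4 → V4 → V4 → ℝ) (α β : Matrix (Fin 4) (Fin 4) ℝ) : ℝ :=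
  (1/4) * ∑ i : Fin 4, ∑ j : Fin 4, ∑ k : Fin 4, ∑ l : Fin 4,
    α i j * β k l * weyl A (stdb i) (stdb j) (stdb k) (stdb l)

/-- `E₁^ε = (1/√2)(e₁∧e₂ + ε e₃∧e₄)`, `E₂^ε = (1/√2)(e₁∧e₃ + ε e₂∧e₄)`,
`E₃^ε = (1/√2)(e₁∧e₄ − ε e₂∧e₃)`.  For `ε = 1` this is the standard basis of the
self-dual 2-vectors `Λ⁺`; for `ε = −1`, of the anti-self-dual 2-vectors `Λ⁻`. -/
noncomputable def Evec (ε : ℝ) : Fin 3 → Matrix (Fin 4) (Fin 4) ℝ :=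
  ![(Real.sqrt 2)⁻¹ • (wedge (stdb 0) (stdb 1) + ε • wedge (stdb 2) (stdb 3)),
    (Real.sqrt 2)⁻¹ • (wedge (stdb 0) (stdb 2) + ε • wedge (stdb 1) (stdb 3)),
    (Real.sqrt 2)⁻¹ • (wedge (stdb 0) (stdb 3) - ε • wedge (stdb 1) (stdb 2))]

/-- The space `Λ⁺` of self-dual 2-vectors. -/
def LambdaPlus : Submodule ℝ (Matrix (Fin 4) (Fin 4) ℝ) :=
  Submodule.span ℝ (Set.range (Evec 1))

/-- The space `Λ⁻` of anti-self-dual 2-vectors. -/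
def LambdaMinus : Submodule ℝ (Matrix (Fin 4) (Fin 4) ℝ) :=
  Submodule.span ℝ (Set.range (Evec (-1)))

/-- Self-dual: the Weyl form vanishes identically on `Λ⁻`. -/
def SelfDual (A : V4 → V4 → V4 → V4 → ℝ) : Prop :=
  ∀ α ∈ LambdaMinus, ∀ β ∈ LambdaMinus, weylForm A α β = 0

/-- Anti-self-dual: the Weyl form vanishes identically on `Λ⁺`. -/
def AntiSelfDual (A : V4 → V4 → V4 → V4 → ℝ) : Prop :=
  ∀ α ∈ LambdaPlus, ∀ β ∈ LambdaPlus, weylForm A α β = 0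

/-- The curvature tensor `A⁰` of constant sectional curvature `+1`. -/
def Acurv0 (x y z v : V4) : ℝ := nip y z * nip x v - nip x z * nip y v

/-- The curvature tensor `A^Ψ` of a skew-adjoint endomorphism `Ψ`. -/
def AcurvPsi (Ψ : Matrix (Fin 4) (Fin 4) ℝ) (x y z v : V4) : ℝ :=
  nip (Ψ.mulVec y) z * nip (Ψ.mulVec x) v - nip (Ψ.mulVec x) z * nip (Ψ.mulVec y) v
    - 2 * nip (Ψ.mulVec x) y * nip (Ψ.mulVec z) v

/-- Skew-adjoint with respect to the neutral inner product. -/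
def SkewAdjointM (Ψ : Matrix (Fin 4) (Fin 4) ℝ) : Prop :=
  ∀ x y : V4, nip (Ψ.mulVec x) y = - nip x (Ψ.mulVec y)

/-- An orthogonal complex structure: skew-adjoint with `J² = −id`. -/
def OrthComplexStructure (J : Matrix (Fin 4) (Fin 4) ℝ) : Prop :=
  SkewAdjointM J ∧ J * J = -1

/-- An adapted paracomplex structure: skew-adjoint with `P² = id`. -/
def AdaptedParaStructure (P : Matrix (Fin 4) (Fin 4) ℝ) : Prop :=
  SkewAdjointM P ∧ P * P = 1

/-- A paraquaternionic structure. -/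
def Paraquaternionic (P₁ P₂ P₃ : Matrix (Fin 4) (Fin 4) ℝ) : Prop :=
  SkewAdjointM P₁ ∧ SkewAdjointM P₂ ∧ SkewAdjointM P₃ ∧
  P₁ * P₁ = -1 ∧ P₂ * P₂ = 1 ∧ P₃ * P₃ = 1 ∧
  P₁ * P₂ + P₂ * P₁ = 0 ∧ P₁ * P₃ + P₃ * P₁ = 0 ∧ P₂ * P₃ + P₃ * P₂ = 0

/-- The standard paraquaternionic structure: `Ψ₁`. -/
def psi1 : Matrix (Fin 4) (Fin 4) ℝ :=
  !![0, 1, 0, 0; -1, 0, 0, 0; 0, 0, 0, -1; 0, 0, 1, 0]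

/-- The standard paraquaternionic structure: `Ψ₂`. -/
def psi2 : Matrix (Fin 4) (Fin 4) ℝ :=
  !![0, 0, 1, 0; 0, 0, 0, 1; 1, 0, 0, 0; 0, 1, 0, 0]

/-- The standard paraquaternionic structure: `Ψ₃`. -/
def psi3 : Matrix (Fin 4) (Fin 4) ℝ :=
  !![0, 0, 0, 1; 0, 0, -1, 0; 0, -1, 0, 0; 1, 0, 0, 0]

/-- The curvature tensor `A_{κ₀,ξ}` of the Gilkey–Ivanova ansatz. -/
noncomputable def AKxi (κ₀ ξ11 ξ12 ξ13 ξ22 ξ23 ξ33 : ℝ) : V4 → V4 → V4 → V4 → ℝ :=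
  fun x y z w =>
    κ₀ * Acurv0 x y z w + (1/3) *
      (ξ11 * AcurvPsi psi1 x y z w + ξ22 * AcurvPsi psi2 x y z w
        + ξ33 * AcurvPsi psi3 x y z w + ξ12 * AcurvPsi (psi1 + psi2) x y z w
        + ξ13 * AcurvPsi (psi1 + psi3) x y z w + ξ23 * AcurvPsi (psi2 + psi3) x y z w)

/-- The `3 × 3` matrix `𝒥_{κ₀,ξ}`. -/
def Jmat (κ₀ ξ11 ξ12 ξ13 ξ22 ξ23 ξ33 : ℝ) : Matrix (Fin 3) (Fin 3) ℝ :=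
  κ₀ • (1 : Matrix (Fin 3) (Fin 3) ℝ) +
    !![ξ11 + ξ12 + ξ13, -ξ12, -ξ13;
       ξ12, -ξ22 - ξ12 - ξ23, -ξ23;
       ξ13, -ξ23, -ξ33 - ξ13 - ξ23]

/-- An oriented orthonormal basis of `(V,⟨·,·⟩)`: `b₁, b₂` timelike, `b₃, b₄` spacelike,
mutually orthogonal, with positively-oriented change-of-basis matrix. -/
def OrientedONB (b : Fin 4 → V4) : Prop :=
  (∀ i j : Fin 4, nip (b i) (b j) = if i = j then eps i else 0) ∧
  0 < (Matrix.of fun i j : Fin 4 => b j i).det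

/-! The trace of `J_A(v)` is `ρ_A(v, v)`, so nilpotency of `J_A` on null vectors makes the
symmetric Ricci form vanish on the null cone. A symmetric bilinear form `B` vanishing on the null
cone is a multiple of `⟨·,·⟩`: whenever `u + w` and `u - w` are both null, polarization gives
`B(u, w) = 0` and `B(u, u) = -B(w, w)`. The pairs `(eₐ, e_b)` with `eₐ` timelike and `e_b`
spacelike kill the mixed entries and equalize the diagonal up to the signs `εᵢ`; the pairs
`(e₁ ± e₂, e₃ + e₄)` kill `B(e₁, e₂)` and `B(e₃, e₄)`. -/

namespace LinearMap.BilinForm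

variable {M : Type*} [AddCommGroup M] [Module ℝ M] {B : LinearMap.BilinForm ℝ M}

theorem IsSymm.apply_eq_zero_of_add_sub_isotropic (hB : B.IsSymm) {u w : M}
    (hadd : B (u + w) (u + w) = 0) (hsub : B (u - w) (u - w) = 0) :
    B u w = 0 ∧ B u u = -B w w := by
  simp only [map_add, map_sub, LinearMap.add_apply, LinearMap.sub_apply, hB.eq w u] at hadd hsub
  constructor <;> linarith

end LinearMap.BilinForm

def nipForm : LinearMap.BilinForm ℝ V4 :=
  LinearMap.mk₂ ℝ nip
    (fun x x' y => by simp only [nip, Pi.add_apply]; ring)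
    (fun c x y => by simp only [nip, Pi.smul_apply, smul_eq_mul]; ring)
    (fun x y y' => by simp only [nip, Pi.add_apply]; ring)
    (fun c x y => by simp only [nip, Pi.smul_apply, smul_eq_mul]; ring)

@[simp]
theorem nipForm_apply (x y : V4) : nipForm x y = nip x y := rfl

theorem exists_eq_smul_nipForm_of_isotropic {B : LinearMap.BilinForm ℝ V4} (hB : B.IsSymm)
    (hnull : ∀ v, nip v v = 0 → B v v = 0) : ∃ c : ℝ, B = c • nipForm := by
  set e := Pi.basisFun ℝ (Fin 4)
  have polar (u w : V4) (hadd : nip (u + w) (u + w) = 0) (hsub : nip (u - w) (u - w) = 0) :=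
    hB.apply_eq_zero_of_add_sub_isotropic (hnull _ hadd) (hnull _ hsub)
  obtain ⟨h02, h00⟩ := polar (e 0) (e 2) (by simp [e, nip]) (by simp [e, nip])
  obtain ⟨h03, h00'⟩ := polar (e 0) (e 3) (by simp [e, nip]) (by simp [e, nip])
  obtain ⟨h12, h11⟩ := polar (e 1) (e 2) (by simp [e, nip]) (by simp [e, nip])
  obtain ⟨h13, -⟩ := polar (e 1) (e 3) (by simp [e, nip]) (by simp [e, nip])
  obtain ⟨-, hsum⟩ := polar (e 0 + e 1) (e 2 + e 3) (by simp [e, nip]) (by simp [e, nip])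
  obtain ⟨-, hdiff⟩ := polar (e 0 - e 1) (e 2 + e 3) (by simp [e, nip]) (by simp [e, nip])
  simp only [map_add, map_sub, LinearMap.add_apply, LinearMap.sub_apply, hB.eq (e 1) (e 0),
    hB.eq (e 3) (e 2)] at hsum hdiff
  refine ⟨B (e 2) (e 2), LinearMap.BilinForm.ext_basis e fun i j => ?_⟩
  have hji := hB.eq (e j) (e i)
  simp only [e, Pi.basisFun_apply] at *
  fin_cases i <;> fin_cases j <;> simp [nip] at hji ⊢ <;> linarith

section Ricci

variable {A : V4 → V4 → V4 → V4 → ℝ}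

theorem IsMultilinear.ricci_smul_add_left (hA : IsMultilinear A) (c : ℝ) (x x' y : V4) :
    ricci A (c • x + x') y = c * ricci A x y + ricci A x' y := by
  simp only [ricci, hA.2.1, mul_add, Finset.sum_add_distrib, Finset.mul_sum]
  congr 1
  exact Finset.sum_congr rfl fun i _ => by ring

theorem IsMultilinear.ricci_smul_add_right (hA : IsMultilinear A) (c : ℝ) (x y y' : V4) :
    ricci A x (c • y + y') = c * ricci A x y + ricci A x y' := by
  simp only [ricci, hA.2.2.1, mul_add, Finset.sum_add_distrib, Finset.mul_sum]
  congr 1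
  exact Finset.sum_congr rfl fun i _ => by ring

theorem IsMultilinear.ricci_zero_left (hA : IsMultilinear A) (y : V4) : ricci A 0 y = 0 := by
  have := hA.ricci_smul_add_left 1 0 0 y
  simp only [one_smul, add_zero, one_mul] at this
  linarith

theorem IsMultilinear.ricci_zero_right (hA : IsMultilinear A) (x : V4) : ricci A x 0 = 0 := by
  have := hA.ricci_smul_add_right 1 x 0 0
  simp only [one_smul, add_zero, one_mul] at this
  linarith

def ricciForm (hA : IsMultilinear A) : LinearMap.BilinForm ℝ V4 :=
  LinearMap.mk₂ ℝ (ricci A)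
    (fun x x' y => by simpa using hA.ricci_smul_add_left 1 x x' y)
    (fun c x y => by simpa [hA.ricci_zero_left] using hA.ricci_smul_add_left c x 0 y)
    (fun x y y' => by simpa using hA.ricci_smul_add_right 1 x y y')
    (fun c x y => by simpa [hA.ricci_zero_right] using hA.ricci_smul_add_right c x y 0)

@[simp]
theorem ricciForm_apply (hA : IsMultilinear A) (x y : V4) : ricciForm hA x y = ricci A x y := rfl

theorem HasCurvSym.ricci_comm (hA : HasCurvSym A) (x y : V4) : ricci A x y = ricci A y x := by
  obtain ⟨antisymm, pair_symm, -⟩ := hA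
  refine Finset.sum_congr rfl fun i _ => congrArg _ ?_
  rw [antisymm (stdb i) y, pair_symm y, antisymm x, neg_neg]

theorem ricciForm_isSymm (hA : IsModel A) : (ricciForm hA.1).IsSymm :=
  ⟨fun x y => hA.2.ricci_comm x y⟩

theorem trace_jacobi (x : V4) : (jacobi A x).trace = ricci A x x := by
  simp [Matrix.trace, jacobi, ricci]

theorem NullOsserman.ricci_self_eq_zero (h : NullOsserman A) {v : V4} (hv : nip v v = 0) :
    ricci A v v = 0 := by
  rw [← trace_jacobi]
  exact (Matrix.isNilpotent_trace_of_isNilpotent (h v hv)).eq_zero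

end Ricci

/-- Lemma 2.1 (2): a null Osserman model of signature (2,2) is Einstein. -/
theorem null_osserman_implies_einstein (A : V4 → V4 → V4 → V4 → ℝ)
    (hA : IsModel A) (h : NullOsserman A) : Einstein A := by
  obtain ⟨c, hc⟩ := exists_eq_smul_nipForm_of_isotropic (ricciForm_isSymm hA)
    fun v hv => h.ricci_self_eq_zero hv
  exact ⟨c, fun x y => by simpa using LinearMap.congr_fun₂ hc x y⟩
end

section
/- Let 𝔐 = (V,⟨·,·⟩,A) be an Einstein model of neutral signature (2,2) and write A_{ijkl} = A(e_i,e_j,e_k,e_l). For ε = +1 (with the basis {E₁⁺,E₂⁺,E₃⁺} of Λ⁺) and ε = −1 (with the basis {E₁⁻,E₂⁻,E₃⁻} of Λ⁻), the values of the Weyl bilinear form are: W_A(E₁^ε,E₁^ε) = σ₁/3, W_A(E₂^ε,E₂^ε) = σ₂/3, W_A(E₃^ε,E₃^ε) = σ₃/3, W_A(E₁^ε,E₂^ε) = A_{1213} + ε A_{1224}, W_A(E₁^ε,E₃^ε) = A_{1214} − ε A_{1223}, W_A(E₂^ε,E₃^ε) = A_{1314} − ε A_{1323}, where σ₁ = 2A_{1212}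 + 3εA_{1234} + A_{1313} + A_{1414}, σ₂ = A_{1212} + 2A_{1313} + 3εA_{1324} − A_{1414}, σ₃ = A_{1212} + 3εA_{1234} − A_{1313} − 3εA_{1324} + 2A_{1414}. -/
open Matrix BigOperators

/-- The components `A(e_i, e_j, e_k, e_l)`. -/
def Acomp (A : V4 → V4 → V4 → V4 → ℝ) (i j k l : Fin 4) : ℝ :=
  A (stdb i) (stdb j) (stdb k) (stdb l)

/-! For an Einstein model `ρ = c⟨·,·⟩` one has `τ = 4c`, so the Weyl tensor is
`A − (c/3) A⁰` and the Weyl form on `E_i^ε` is a combination of components of `A`. The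
remaining Ricci equations `ρ(e_a, e_b) = c⟨e_a, e_b⟩` say that `A` commutes, up to sign, with
the Hodge star on coordinate 2-planes; together with the first Bianchi identity this turns each
value into the stated one. -/

theorem nip_stdb (i j : Fin 4) : nip (stdb i) (stdb j) = if i = j then eps i else 0 := by
  fin_cases i <;> fin_cases j <;> simp [nip, stdb, eps]

section Curvature

variable {A : V4 → V4 → V4 → V4 → ℝ}

theorem HasCurvSym.antisymm_right (hA : HasCurvSym A) (x y z w : V4) :
    A x y z w = -A x y w z := by
  rw [hA.2.1, hA.1, ← hA.2.1]

theorem HasCurvSym.swap_swap (hA : HasCurvSym A) (x y z w : V4) : A y x w z = A x y z w := by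
  rw [hA.1, ← hA.antisymm_right]

theorem apply_self_left_eq_zero (h : ∀ x y z w, A x y z w = -A y x z w) (x z w : V4) :
    A x x z w = 0 := by
  linarith [h x x z w]

theorem HasCurvSym.apply_self_right_eq_zero (hA : HasCurvSym A) (x y z : V4) :
    A x y z z = 0 := by
  linarith [hA.antisymm_right x y z z]

theorem ricci_stdb (h : ∀ x y z w, A x y z w = -A y x z w) (a b : Fin 4) :
    ricci A (stdb a) (stdb b) =
      Acomp A a 0 b 0 + Acomp A a 1 b 1 - Acomp A a 2 b 2 - Acomp A a 3 b 3 := by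
  simp only [ricci, Fin.sum_univ_four, h (stdb _) (stdb a), Acomp, eps, Matrix.cons_val]
  ring

theorem weyl_antisymm_left (h : ∀ x y z w, A x y z w = -A y x z w) (x y z v : V4) :
    weyl A x y z v = -weyl A y x z v := by
  rw [weyl, weyl, h x y]
  ring

theorem weyl_antisymm_right (h : ∀ x y z w, A x y z w = -A x y w z) (x y z v : V4) :
    weyl A x y z v = -weyl A x y v z := by
  rw [weyl, weyl, h x y z]
  ring

variable {c : ℝ}

theorem scal_of_einstein (hc : ∀ x y, ricci A x y = c * nip x y) : scal A = 4 * c := by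
  simp only [scal, hc, nip_stdb, if_pos, Fin.sum_univ_four, eps, Matrix.cons_val]
  ring

theorem weyl_of_einstein (hc : ∀ x y, ricci A x y = c * nip x y) (x y z v : V4) :
    weyl A x y z v = A x y z v - c / 3 * Acurv0 x y z v := by
  rw [weyl, scal_of_einstein hc, hc, hc, hc, hc, Acurv0]
  ring

theorem einstein_const_eq (h : ∀ x y z w, A x y z w = -A y x z w)
    (hc : ∀ x y, ricci A x y = c * nip x y) :
    c = -Acomp A 0 1 0 1 + Acomp A 0 2 0 2 + Acomp A 0 3 0 3 := by
  have h₀ := hc (stdb 0) (stdb 0)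
  simp only [ricci_stdb h, nip_stdb, Acomp, apply_self_left_eq_zero h, if_pos, eps,
    Matrix.cons_val] at h₀
  simp only [Acomp]
  linarith

/- In dimension four an Einstein curvature tensor commutes with the Hodge star: its value on two
coordinate 2-planes is unchanged, up to sign, when both are replaced by their orthogonal
complements. -/
theorem Acomp_compl_diag_of_einstein (hA : HasCurvSym A)
    (hc : ∀ x y, ricci A x y = c * nip x y) :
    Acomp A 2 3 2 3 = Acomp A 0 1 0 1 ∧ Acomp A 1 3 1 3 = Acomp A 0 2 0 2 ∧
      Acomp A 1 2 1 2 = Acomp A 0 3 0 3 := by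
  have h₀ := hc (stdb 0) (stdb 0)
  have h₁ := hc (stdb 1) (stdb 1)
  have h₂ := hc (stdb 2) (stdb 2)
  have h₃ := hc (stdb 3) (stdb 3)
  simp only [ricci_stdb hA.1, nip_stdb, Acomp, apply_self_left_eq_zero hA.1, if_pos, eps,
    Matrix.cons_val, hA.swap_swap (stdb 0), hA.swap_swap (stdb 1) (stdb 2),
    hA.swap_swap (stdb 1) (stdb 3), hA.swap_swap (stdb 2) (stdb 3)] at h₀ h₁ h₂ h₃
  simp only [Acomp]
  refine ⟨?_, ?_, ?_⟩ <;> linarith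

theorem Acomp_compl_offdiag_of_einstein (hA : HasCurvSym A)
    (hc : ∀ x y, ricci A x y = c * nip x y) :
    Acomp A 2 3 0 2 = Acomp A 0 1 1 3 ∧ Acomp A 2 3 1 3 = Acomp A 0 1 0 2 ∧
      Acomp A 2 3 0 3 = -Acomp A 0 1 1 2 ∧ Acomp A 2 3 1 2 = -Acomp A 0 1 0 3 ∧
      Acomp A 1 3 0 3 = -Acomp A 0 2 1 2 ∧ Acomp A 1 3 1 2 = -Acomp A 0 2 0 3 := by
  have h₀₁ := hc (stdb 0) (stdb 1)
  have h₀₂ := hc (stdb 0) (stdb 2)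
  have h₀₃ := hc (stdb 0) (stdb 3)
  have h₁₂ := hc (stdb 1) (stdb 2)
  have h₁₃ := hc (stdb 1) (stdb 3)
  have h₂₃ := hc (stdb 2) (stdb 3)
  simp only [ricci_stdb hA.1, nip_stdb, Acomp, apply_self_left_eq_zero hA.1,
    hA.apply_self_right_eq_zero, Fin.reduceEq, if_false, mul_zero] at h₀₁ h₀₂ h₀₃ h₁₂ h₁₃ h₂₃
  simp only [Acomp]
  refine ⟨?_, ?_, ?_, ?_, ?_, ?_⟩
  · linarith [hA.antisymm_right (stdb 0) (stdb 1) (stdb 3) (stdb 1),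
      hA.antisymm_right (stdb 0) (stdb 2) (stdb 3) (stdb 2),
      hA.2.1 (stdb 2) (stdb 3) (stdb 0) (stdb 2)]
  · linarith [hA.swap_swap (stdb 0) (stdb 1) (stdb 0) (stdb 2),
      hA.2.1 (stdb 1) (stdb 3) (stdb 2) (stdb 3)]
  · linarith [hA.antisymm_right (stdb 0) (stdb 1) (stdb 2) (stdb 1),
      hA.2.1 (stdb 0) (stdb 3) (stdb 2) (stdb 3)]
  · linarith [hA.swap_swap (stdb 0) (stdb 1) (stdb 0) (stdb 3),
      hA.antisymm_right (stdb 1) (stdb 2) (stdb 3) (stdb 2),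
      hA.2.1 (stdb 1) (stdb 2) (stdb 2) (stdb 3)]
  · linarith [hA.2.1 (stdb 0) (stdb 3) (stdb 1) (stdb 3)]
  · linarith [hA.swap_swap (stdb 0) (stdb 2) (stdb 0) (stdb 3),
      hA.swap_swap (stdb 1) (stdb 2) (stdb 1) (stdb 3),
      hA.2.1 (stdb 1) (stdb 2) (stdb 1) (stdb 3)]

end Curvature

/-- `weylForm` as a bilinear map, so that it can be expanded on the combinations `Evec ε i` of
wedges. -/
noncomputable def bivectorForm (T : V4 → V4 → V4 → V4 → ℝ) :
    Matrix (Fin 4) (Fin 4) ℝ →ₗ[ℝ] Matrix (Fin 4) (Fin 4) ℝ →ₗ[ℝ] ℝ :=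
  LinearMap.mk₂ ℝ
    (fun α β => (1/4) * ∑ i, ∑ j, ∑ k, ∑ l,
      α i j * β k l * T (stdb i) (stdb j) (stdb k) (stdb l))
    (fun _ _ _ => by simp only [Matrix.add_apply, add_mul, Finset.sum_add_distrib, mul_add])
    (fun _ _ _ => by
      simp only [Matrix.smul_apply, smul_eq_mul, mul_assoc, ← Finset.mul_sum]
      ring)
    (fun _ _ _ => by simp only [Matrix.add_apply, mul_add, add_mul, Finset.sum_add_distrib])
    (fun _ _ _ => by
      simp only [Matrix.smul_apply, smul_eq_mul, Finset.mul_sum, mul_assoc, mul_left_comm])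

theorem weylForm_eq_bivectorForm (A : V4 → V4 → V4 → V4 → ℝ)
    (α β : Matrix (Fin 4) (Fin 4) ℝ) :
    weylForm A α β = bivectorForm (weyl A) α β := rfl

theorem wedge_stdb (a b : Fin 4) :
    wedge (stdb a) (stdb b) = Matrix.single a b 1 - Matrix.single b a 1 := by
  ext i j
  simp only [wedge, stdb, Matrix.single_apply, Matrix.of_apply, Matrix.sub_apply, mul_ite,
    mul_one, mul_zero, ite_and]
  grind

theorem bivectorForm_single (T : V4 → V4 → V4 → V4 → ℝ) (a b c d : Fin 4) :
    bivectorForm T (Matrix.single a b 1) (Matrix.single c d 1) =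
      T (stdb a) (stdb b) (stdb c) (stdb d) / 4 := by
  simp [bivectorForm, Matrix.single_apply, ite_and, div_eq_inv_mul]

theorem bivectorForm_wedge_stdb {T : V4 → V4 → V4 → V4 → ℝ}
    (hT₁ : ∀ x y z v, T x y z v = -T y x z v) (hT₂ : ∀ x y z v, T x y z v = -T x y v z)
    (a b c d : Fin 4) :
    bivectorForm T (wedge (stdb a) (stdb b)) (wedge (stdb c) (stdb d)) =
      T (stdb a) (stdb b) (stdb c) (stdb d) := by
  simp only [wedge_stdb, map_sub, LinearMap.sub_apply, bivectorForm_single]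
  linarith [hT₁ (stdb a) (stdb b) (stdb c) (stdb d), hT₁ (stdb a) (stdb b) (stdb d) (stdb c),
    hT₂ (stdb a) (stdb b) (stdb c) (stdb d)]

/-- Lemma 2.2: the values of the Weyl bilinear form of an Einstein model on the
bases `{E₁^ε, E₂^ε, E₃^ε}` of `Λ⁺` (`ε = 1`) and `Λ⁻` (`ε = −1`). -/
theorem weyl_form_on_selfdual_basis (A : V4 → V4 → V4 → V4 → ℝ)
    (hA : IsModel A) (hE : Einstein A) (ε : ℝ) (hε : ε = 1 ∨ ε = -1) :
    weylForm A (Evec ε 0) (Evec ε 0) =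
      (2 * Acomp A 0 1 0 1 + 3 * ε * Acomp A 0 1 2 3 + Acomp A 0 2 0 2
        + Acomp A 0 3 0 3) / 3 ∧
    weylForm A (Evec ε 1) (Evec ε 1) =
      (Acomp A 0 1 0 1 + 2 * Acomp A 0 2 0 2 + 3 * ε * Acomp A 0 2 1 3
        - Acomp A 0 3 0 3) / 3 ∧
    weylForm A (Evec ε 2) (Evec ε 2) =
      (Acomp A 0 1 0 1 + 3 * ε * Acomp A 0 1 2 3 - Acomp A 0 2 0 2
        - 3 * ε * Acomp A 0 2 1 3 + 2 * Acomp A 0 3 0 3) / 3 ∧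
    weylForm A (Evec ε 0) (Evec ε 1) = Acomp A 0 1 0 2 + ε * Acomp A 0 1 1 3 ∧
    weylForm A (Evec ε 0) (Evec ε 2) = Acomp A 0 1 0 3 - ε * Acomp A 0 1 1 2 ∧
    weylForm A (Evec ε 1) (Evec ε 2) = Acomp A 0 2 0 3 - ε * Acomp A 0 2 1 2 := by
  obtain ⟨-, hA⟩ := hA
  obtain ⟨c, hc⟩ := hE
  have hc₀ := einstein_const_eq hA.1 hc
  obtain ⟨d₁, d₂, d₃⟩ := Acomp_compl_diag_of_einstein hA hc
  obtain ⟨o₁, o₂, o₃, o₄, o₅, o₆⟩ := Acomp_compl_offdiag_of_einstein hA hc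
  have hbianchi := hA.2.2 (stdb 0) (stdb 1) (stdb 2) (stdb 3)
  simp only [Acomp] at hc₀ d₁ d₂ d₃ o₁ o₂ o₃ o₄ o₅ o₆
  simp only [weylForm_eq_bivectorForm, Evec, Matrix.cons_val, map_smul, LinearMap.smul_apply,
    smul_smul, TsirelsonInequality.sqrt_two_inv_mul_self]
  simp only [map_add, map_sub, map_smul, LinearMap.add_apply, LinearMap.sub_apply,
    LinearMap.smul_apply, smul_eq_mul,
    bivectorForm_wedge_stdb (weyl_antisymm_left hA.1) (weyl_antisymm_right hA.antisymm_right),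
    weyl_of_einstein hc, Acurv0, nip_stdb, Fin.reduceEq, ↓reduceIte, eps, Matrix.cons_val, Acomp]
  rcases hε with rfl | rfl <;> refine ⟨?_, ?_, ?_, ?_, ?_, ?_⟩ <;>
    linarith [hA.2.1 (stdb 2) (stdb 3) (stdb 0) (stdb 1),
      hA.2.1 (stdb 1) (stdb 3) (stdb 0) (stdb 2), hA.2.1 (stdb 1) (stdb 2) (stdb 0) (stdb 3),
      hA.1 (stdb 2) (stdb 0) (stdb 1) (stdb 3)]
end
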